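/- Let F and F' be deterministic p-filters (F possibly multi-outputting) such that F' output simulates F. Then for every state v' of F', the set K_{v'} of states of F corresponding to v' is group compatible. -/

import Mathlib

/-- A procrustean filter (p-filter): states `V`, a nonempty set of initial
states, observations `Y`, a transition function `tr : V → V → Set Y`,
an output space `C`, and an output function `out : V → Set C` mapping each
state to a nonempty set of outputs. -/
structure PFilter (V Y C : Type) where
  init : Set V
  init_nonempty : init.Nonempty
  tr : V → V → Set Y
  out : V → Set C
  out_nonempty : ∀ v, (out v).Nonempty

namespace PFilter

variable {V V' Y C : Type}

/-- `F.Reaches v s u` : the observation string `s` reaches state `u` from `v`. -/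
inductive Reaches (F : PFilter V Y C) : V → List Y → V → Prop
  | nil (v : V) : Reaches F v [] v
  | cons {v w u : V} {y : Y} {s : List Y} :
      y ∈ F.tr v w → Reaches F w s u → Reaches F v (y :: s) u

/-- The set of states reached by `s` when traced from state `v`. -/
def reachedFrom (F : PFilter V Y C) (v : V) (s : List Y) : Set V :=
  {u | F.Reaches v s u}

/-- The set of states reached by `s` from some initial state. -/
def reached (F : PFilter V Y C) (s : List Y) : Set V :=
  {u | ∃ v0 ∈ F.init, F.Reaches v0 s u}

/-- The extensions of a state `v`: strings that do not crash from `v`. -/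
def extensions (F : PFilter V Y C) (v : V) : Set (List Y) :=
  {s | ∃ u, F.Reaches v s u}

/-- The interaction language of `F`: extensions of initial states. -/
def language (F : PFilter V Y C) : Set (List Y) :=
  {s | ∃ v0 ∈ F.init, ∃ u, F.Reaches v0 s u}

/-- The filter output for string `s`: union of outputs of states reached by `s`. -/
def outputs (F : PFilter V Y C) (s : List Y) : Set C :=
  ⋃ v ∈ F.reached s, F.out v

/-- `F'` output simulates `F`. -/
def OutputSimulates (F' : PFilter V' Y C) (F : PFilter V Y C) : Prop :=
  ∀ s ∈ F.language, (F'.outputs s).Nonempty ∧ F'.outputs s ⊆ F.outputs s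

/-- `F` is deterministic: one initial state, and outgoing transition labels
from any state are pairwise disjoint. -/
def Deterministic (F : PFilter V Y C) : Prop :=
  (∃ v0, F.init = {v0}) ∧
    ∀ v1 v2 v3 : V, v2 ≠ v3 → F.tr v1 v2 ∩ F.tr v1 v3 = ∅

/-- `F` is single-outputting: every state's output set is a singleton. -/
def SingleOutputting (F : PFilter V Y C) : Prop :=
  ∀ v, ∃ o, F.out v = {o}

/-- Two states are compatible: they agree on the outputs of all common extensions. -/
def Compatible (F : PFilter V Y C) (v w : V) : Prop :=
  ∀ s ∈ F.extensions v ∩ F.extensions w,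
    ∀ v' ∈ F.reachedFrom v s, ∀ w' ∈ F.reachedFrom w s, F.out v' = F.out w'

/-- A set of mutually compatible states (a clique in the compatibility graph). -/
def MutuallyCompatible (F : PFilter V Y C) (U : Set V) : Prop :=
  ∀ v ∈ U, ∀ w ∈ U, F.Compatible v w

/-- A set of states is group compatible: there is a common output on
all their extensions. -/
def GroupCompatible (F : PFilter V Y C) (U : Set V) : Prop :=
  ∀ s : List Y, (∃ u ∈ U, s ∈ F.extensions u) →
    (⋂ w ∈ {w | ∃ u ∈ U, w ∈ F.reachedFrom u s}, F.out w).Nonempty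

/-- A state `v` of `F` corresponds to a state `v'` of `F'` if some string
reaches both from the respective initial states. -/
def Corresponds (F : PFilter V Y C) (F' : PFilter V' Y C) (v : V) (v' : V') : Prop :=
  ∃ s : List Y, v ∈ F.reached s ∧ v' ∈ F'.reached s

/-- `K_{v'}` : the set of states of `F` corresponding to a state `v'` of `F'`. -/
def corrSet (F : PFilter V Y C) (F' : PFilter V' Y C) (v' : V') : Set V :=
  {v | Corresponds F F' v v'}

/-- The induced cover `Q(F,F') = {K_{v'} : v' ∈ V(F')}`. -/
def inducedCover (F : PFilter V Y C) (F' : PFilter V' Y C) : Set (Set V) :=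
  Set.range (corrSet F F')

/-- The relation induced on `V(F)` by an output-simulating filter `F'`. -/
def inducedRel (F : PFilter V Y C) (F' : PFilter V' Y C) (v w : V) : Prop :=
  ∃ v' : V', Corresponds F F' v v' ∧ Corresponds F F' w v'

/-- `(U,W)_y` is a zipper constraint: `U` and `W` are sets of mutually
compatible states and `W` is the set of `y`-successors of `U`. -/
def ZipperConstraint (F : PFilter V Y C) (U W : Set V) (y : Y) : Prop :=
  F.MutuallyCompatible U ∧ F.MutuallyCompatible W ∧
    W = {w | ∃ u ∈ U, y ∈ F.tr u w}

/-- A collection of sets `K` satisfies the zipper constraints of `F`. -/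
def SatisfiesZip (F : PFilter V Y C) (K : Set (Set V)) : Prop :=
  ∀ U W y, F.ZipperConstraint U W y → (∃ S ∈ K, U ⊆ S) → ∃ T ∈ K, W ⊆ T

/-- `K` is a clique cover of the compatibility graph of `F` covering all vertices. -/
def IsCliqueCover (F : PFilter V Y C) (K : Set (Set V)) : Prop :=
  (∀ S ∈ K, F.MutuallyCompatible S) ∧ ⋃₀ K = Set.univ

/-- `(U,W)_y` is a generalized zipper constraint: `U` and `W` are group
compatible and `W` is the set of `y`-successors of `U`. -/
def GenZipperConstraint (F : PFilter V Y C) (U W : Set V) (y : Y) : Prop :=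
  F.GroupCompatible U ∧ F.GroupCompatible W ∧
    W = {w | ∃ u ∈ U, y ∈ F.tr u w}

/-- A collection of sets `K` satisfies the generalized zipper constraints of `F`. -/
def SatisfiesGenZip (F : PFilter V Y C) (K : Set (Set V)) : Prop :=
  ∀ U W y, F.GenZipperConstraint U W y → (∃ S ∈ K, U ⊆ S) → ∃ T ∈ K, W ⊆ T

/-- `K` is a cover of `V(F)` by group-compatible sets. -/
def IsGroupCover (F : PFilter V Y C) (K : Set (Set V)) : Prop :=
  (∀ S ∈ K, F.GroupCompatible S) ∧ ⋃₀ K = Set.univ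

/-- `F'` is an induced filter `M(F,K)`: one state per set of `K`; a state is
initial iff its set contains an initial state; output is the intersection of
the outputs over its set; transitions are inherited, and for each state and
observation only a single edge is kept, going to a set that contains all
successors under that observation. -/
def IsInducedFilter (F : PFilter V Y C) (K : Set (Set V))
    (F' : PFilter {S // S ∈ K} Y C) : Prop :=
  F'.init = {S : {S // S ∈ K} | ∃ v ∈ F.init, v ∈ S.1} ∧
  (∀ S, F'.out S = ⋂ v ∈ S.1, F.out v) ∧
  (∀ S T (y : Y), y ∈ F'.tr S T → ∃ v ∈ S.1, ∃ w ∈ T.1, y ∈ F.tr v w) ∧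
  (∀ S T (y : Y), y ∈ F'.tr S T → ∀ w, (∃ v ∈ S.1, y ∈ F.tr v w) → w ∈ T.1) ∧
  (∀ S (y : Y), (∃ v ∈ S.1, ∃ w, y ∈ F.tr v w) → ∃! T, y ∈ F'.tr S T)

/-- `F'` is the merged filter of `F` under cover `K` *without* the pruning
step: initial states are sets containing an initial state, outputs are the
common outputs of each set, and transitions are fully inherited. -/
def IsMergedFilter (F : PFilter V Y C) (K : Set (Set V))
    (F' : PFilter {S // S ∈ K} Y C) : Prop :=
  F'.init = {S : {S // S ∈ K} | ∃ v ∈ F.init, v ∈ S.1} ∧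
  (∀ S, F'.out S = ⋂ v ∈ S.1, F.out v) ∧
  (∀ S T, F'.tr S T = ⋃ v ∈ S.1, ⋃ w ∈ T.1, F.tr v w)

end PFilter

/-!
Every string reaching a state of `K_{v'}` leads the deterministic `F'` to `v'`, so for an
extension `s` all the strings `t ++ s` lead `F'` to one and the same state `w'`. Output
simulation then puts every output of `w'` among the outputs of `F` after `t ++ s`, which for
deterministic `F` are the outputs of the single state reached: those outputs of `w'` are common
to all states reached by `s` from `K_{v'}`.
-/

namespace PFilter

variable {V Y C : Type} {F : PFilter V Y C}

theorem Reaches.append {v m u : V} {t s : List Y} (h₁ : F.Reaches v t m)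
    (h₂ : F.Reaches m s u) : F.Reaches v (t ++ s) u := by
  induction h₁ with
  | nil => exact h₂
  | cons hy _ ih => exact .cons hy (ih h₂)

theorem Reaches.exists_of_append {v u : V} {t s : List Y} (h : F.Reaches v (t ++ s) u) :
    ∃ m, F.Reaches v t m ∧ F.Reaches m s u := by
  induction t generalizing v with
  | nil => exact ⟨v, .nil v, h⟩
  | cons y t ih =>
    cases h with
    | cons hy hrest =>
      obtain ⟨m, hvm, hmu⟩ := ih hrest
      exact ⟨m, .cons hy hvm, hmu⟩

theorem mem_reached_append {m u : V} {t s : List Y} (hm : m ∈ F.reached t)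
    (hu : F.Reaches m s u) : u ∈ F.reached (t ++ s) :=
  let ⟨v₀, hv₀, hv₀m⟩ := hm
  ⟨v₀, hv₀, hv₀m.append hu⟩

theorem mem_language_of_mem_reached {u : V} {s : List Y} (hu : u ∈ F.reached s) :
    s ∈ F.language :=
  let ⟨v₀, hv₀, hv₀u⟩ := hu
  ⟨v₀, hv₀, u, hv₀u⟩

namespace Deterministic

theorem reaches_unique (hdet : F.Deterministic) {v u₁ u₂ : V} {s : List Y}
    (h₁ : F.Reaches v s u₁) (h₂ : F.Reaches v s u₂) : u₁ = u₂ := by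
  induction h₁ generalizing u₂ with
  | @cons v w _ y _ hy _ ih =>
    cases h₂ with
    | @cons _ w₂ _ _ _ hy₂ hr₂ =>
      obtain rfl : w = w₂ := by
        by_contra hne
        have hdisj := hdet.2 v w w₂ hne
        exact (Set.eq_empty_iff_forall_notMem.1 hdisj) y ⟨hy, hy₂⟩
      exact ih hr₂
  | nil => cases h₂; rfl

theorem mem_reached_unique (hdet : F.Deterministic) {u₁ u₂ : V} {s : List Y}
    (h₁ : u₁ ∈ F.reached s) (h₂ : u₂ ∈ F.reached s) : u₁ = u₂ := by
  obtain ⟨v₀, hinit⟩ := hdet.1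
  obtain ⟨a, ha, ha₁⟩ := h₁
  obtain ⟨b, hb, hb₂⟩ := h₂
  rw [hinit, Set.mem_singleton_iff] at ha hb
  subst ha hb
  exact hdet.reaches_unique ha₁ hb₂

theorem outputs_eq_out (hdet : F.Deterministic) {u : V} {s : List Y}
    (hu : u ∈ F.reached s) : F.outputs s = F.out u := by
  ext c
  simp only [outputs, Set.mem_iUnion, exists_prop]
  refine ⟨fun ⟨w, hw, hc⟩ => hdet.mem_reached_unique hw hu ▸ hc, fun hc => ⟨u, hu, hc⟩⟩

theorem reaches_of_mem_reached_append (hdet : F.Deterministic) {m u : V} {t s : List Y}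
    (hm : m ∈ F.reached t) (hu : u ∈ F.reached (t ++ s)) : F.Reaches m s u := by
  obtain ⟨v₀, hv₀, hv₀u⟩ := hu
  obtain ⟨m', hv₀m', hm'u⟩ := hv₀u.exists_of_append
  rwa [hdet.mem_reached_unique hm ⟨v₀, hv₀, hv₀m'⟩]

end Deterministic

end PFilter

theorem corrSet_groupCompatible_general {V V' Y C : Type}
    (F : PFilter V Y C) (F' : PFilter V' Y C)
    (hdet : F.Deterministic) (hdet' : F'.Deterministic)
    (hsim : F'.OutputSimulates F) (v' : V') :
    F.GroupCompatible (PFilter.corrSet F F' v') := by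
  rintro s ⟨u₀, ⟨t₀, hu₀, hv₀'⟩, w₀, hw₀⟩
  have hw₀' : w₀ ∈ F.reached (t₀ ++ s) := PFilter.mem_reached_append hu₀ hw₀
  obtain ⟨c, hc⟩ := (hsim _ (PFilter.mem_language_of_mem_reached hw₀')).1
  obtain ⟨w', hw', hcw'⟩ := Set.mem_iUnion₂.1 hc
  have hv'w' : F'.Reaches v' s w' := hdet'.reaches_of_mem_reached_append hv₀' hw'
  refine ⟨c, Set.mem_iInter₂.2 ?_⟩
  rintro w ⟨u, ⟨t, hu, hv'⟩, huw⟩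
  have hw : w ∈ F.reached (t ++ s) := PFilter.mem_reached_append hu huw
  have hcF := (hsim _ (PFilter.mem_language_of_mem_reached hw)).2
    (Set.mem_biUnion (PFilter.mem_reached_append hv' hv'w') hcw')
  rwa [hdet.outputs_eq_out hw] at hcF

/-- Each correspondence set `K_{v'}` is group compatible. -/
theorem corrSet_groupCompatible {V V' Y C : Type} [Finite V] [Finite V']
    (F : PFilter V Y C) (F' : PFilter V' Y C)
    (hdet : F.Deterministic) (hdet' : F'.Deterministic)
    (hsim : F'.OutputSimulates F) (v' : V') :
    F.GroupCompatible (PFilter.corrSet F F' v') :=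
  corrSet_groupCompatible_general F F' hdet hdet' hsim v'
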